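/- arXiv:2212.11566 — 4 statements merged into one kernel-verified Lean document; each statement's English description precedes it below -/
import Mathlib

section
/- Let (n₁,m₁), (n₂,m₂), (n₃,m₃) be pairs of natural numbers such that: (i) nᵢ+nⱼ and mᵢ+mⱼ are even for every pair i ≠ j; (ii) at most one index i has (nᵢ,mᵢ) = (0,0); (iii) for every i (with {i,j,k} = {1,2,3}), either (nⱼ+nₖ = 4 and mⱼ+mₖ = 4), or nⱼ+nₖ ≤ 2, or mⱼ+mₖ ≤ 2; (iv) there exists i with nⱼ+nₖ = 4 and mⱼ+mₖ = 4; and (v) n₁+n₂+n₃ > 4 and m₁+m₂+m₃ > 4. Then, up to a permutation of the indices and the simultaneous exchange (nᵢ,mᵢ) ↦ (mᵢ,nᵢ) for all i, the triple ((n₁,m₁),(n₂,m₂),(n₃,m₃)) is one of: ((4,1),(0,3),(2,1)), ((4,0),(0,4),(2,2)), ((3,1),(1,3),(1,1)), ((3,1),(1,3),(1,3)), ((3,2),(1,2),(1,2)), ((3,3),(1,1),(1,1)), ((3,0),(1,4),(1,4)), ((2,2),(2,2),(2,2)). -/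
def good (S : Multiset (ℕ × ℕ)) : Prop :=
  S = {(4,1),(0,3),(2,1)} ∨ S = {(4,0),(0,4),(2,2)} ∨ S = {(3,1),(1,3),(1,1)} ∨
  S = {(3,1),(1,3),(1,3)} ∨ S = {(3,2),(1,2),(1,2)} ∨ S = {(3,3),(1,1),(1,1)} ∨
  S = {(3,0),(1,4),(1,4)} ∨ S = {(2,2),(2,2),(2,2)}

instance : DecidablePred good := fun S => by unfold good; infer_instance

def P (a b c d e f : ℕ) : Prop :=
    (a + c) % 2 = 0 → (b + d) % 2 = 0 → (a + e) % 2 = 0 → (b + f) % 2 = 0 →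
    (c + e) % 2 = 0 → (d + f) % 2 = 0 →
    ¬(a = 0 ∧ b = 0 ∧ c = 0 ∧ d = 0) →
    ¬(a = 0 ∧ b = 0 ∧ e = 0 ∧ f = 0) →
    ¬(c = 0 ∧ d = 0 ∧ e = 0 ∧ f = 0) →
    ((c + e = 4 ∧ d + f = 4) ∨ c + e ≤ 2 ∨ d + f ≤ 2) →
    ((a + e = 4 ∧ b + f = 4) ∨ a + e ≤ 2 ∨ b + f ≤ 2) →
    ((a + c = 4 ∧ b + d = 4) ∨ a + c ≤ 2 ∨ b + d ≤ 2) →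
    ((c + e = 4 ∧ d + f = 4) ∨ (a + e = 4 ∧ b + f = 4) ∨ (a + c = 4 ∧ b + d = 4)) →
    4 < a + c + e → 4 < b + d + f →
    good {(a,b),(c,d),(e,f)} ∨ good {(b,a),(d,c),(f,e)}

set_option synthInstance.maxHeartbeats 2000000 in
set_option synthInstance.maxSize 5000 in
noncomputable instance (a b c d e f : ℕ) : Decidable (P a b c d e f) := by
  unfold P; infer_instance

set_option maxHeartbeats 2000000 in
lemma key : ∀ a < 5, ∀ b < 5, ∀ c < 5, ∀ d < 5, ∀ e < 5, ∀ f < 5, P a b c d e f := by decide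

/-- Arithmetic core of the general-type part (`K_X² > 0`) of the
classification of smooth bidouble covers of ℙ¹×ℙ¹ (Theorem 5.1, Table 4). -/
theorem bidouble_cover_P1xP1_general_type_classification
    (n₁ m₁ n₂ m₂ n₃ m₃ : ℕ)
    (hn₁₂ : Even (n₁ + n₂)) (hm₁₂ : Even (m₁ + m₂))
    (hn₁₃ : Even (n₁ + n₃)) (hm₁₃ : Even (m₁ + m₃))
    (hn₂₃ : Even (n₂ + n₃)) (hm₂₃ : Even (m₂ + m₃))
    (hzero₁₂ : ¬(n₁ = 0 ∧ m₁ = 0 ∧ n₂ = 0 ∧ m₂ = 0))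
    (hzero₁₃ : ¬(n₁ = 0 ∧ m₁ = 0 ∧ n₃ = 0 ∧ m₃ = 0))
    (hzero₂₃ : ¬(n₂ = 0 ∧ m₂ = 0 ∧ n₃ = 0 ∧ m₃ = 0))
    (hY₁ : (n₂ + n₃ = 4 ∧ m₂ + m₃ = 4) ∨ n₂ + n₃ ≤ 2 ∨ m₂ + m₃ ≤ 2)
    (hY₂ : (n₁ + n₃ = 4 ∧ m₁ + m₃ = 4) ∨ n₁ + n₃ ≤ 2 ∨ m₁ + m₃ ≤ 2)
    (hY₃ : (n₁ + n₂ = 4 ∧ m₁ + m₂ = 4) ∨ n₁ + n₂ ≤ 2 ∨ m₁ + m₂ ≤ 2)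
    (hK3 : (n₂ + n₃ = 4 ∧ m₂ + m₃ = 4) ∨ (n₁ + n₃ = 4 ∧ m₁ + m₃ = 4) ∨
      (n₁ + n₂ = 4 ∧ m₁ + m₂ = 4))
    (hKn : 4 < n₁ + n₂ + n₃) (hKm : 4 < m₁ + m₂ + m₃) :
    ∃ S : Multiset (ℕ × ℕ),
      (S = {(n₁, m₁), (n₂, m₂), (n₃, m₃)} ∨ S = {(m₁, n₁), (m₂, n₂), (m₃, n₃)}) ∧
      (S = {(4,1),(0,3),(2,1)} ∨ S = {(4,0),(0,4),(2,2)} ∨ S = {(3,1),(1,3),(1,1)} ∨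
       S = {(3,1),(1,3),(1,3)} ∨ S = {(3,2),(1,2),(1,2)} ∨ S = {(3,3),(1,1),(1,1)} ∨
       S = {(3,0),(1,4),(1,4)} ∨ S = {(2,2),(2,2),(2,2)}) := by
  rw [Nat.even_iff] at hn₁₂ hm₁₂ hn₁₃ hm₁₃ hn₂₃ hm₂₃
  have b1 : n₁ < 5 := by omega
  have b2 : m₁ < 5 := by omega
  have b3 : n₂ < 5 := by omega
  have b4 : m₂ < 5 := by omega
  have b5 : n₃ < 5 := by omega
  have b6 : m₃ < 5 := by omega
  have h := key n₁ b1 m₁ b2 n₂ b3 m₂ b4 n₃ b5 m₃ b6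
  unfold P at h
  have h' := h hn₁₂ hm₁₂ hn₁₃ hm₁₃ hn₂₃ hm₂₃ hzero₁₂ hzero₁₃ hzero₂₃ hY₁ hY₂ hY₃ hK3 hKn hKm
  rcases h' with hg | hg
  · exact ⟨_, Or.inl rfl, hg⟩
  · exact ⟨_, Or.inr rfl, hg⟩
end

section
/- Let n ≥ 2 be a natural number and let a₁, b₁, a₂, b₂ be natural numbers with a₁ ≥ 1, a₁ + a₂ = 4, b₁ + b₂ = 2n + 4, b₁ = n·(a₁ − 1), and such that either a₂ = 0 or b₂ ≥ n·a₂. Then n ≤ 4. -/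
/-- Arithmetic core of the bound `n ≤ 4` in Proposition 6.3(b) and Theorem
1.1(3): on 𝔽_n (`n ≥ 2`), if `D₁ ~ a₁C + b₁F` contains the negative section `C`
(so `b₁ = n(a₁ − 1)` with `a₁ ≥ 1`), `D₂ ~ a₂C + b₂F` does not contain `C`
(so `a₂ = 0` or `b₂ ≥ n·a₂`), and `D₁ + D₂ = −2K` (so `a₁ + a₂ = 4`,
`b₁ + b₂ = 2n + 4`), then `n ≤ 4`. -/
theorem bidouble_cover_Fn_reducible_case_bound
    (n a₁ b₁ a₂ b₂ : ℕ) (hn : 2 ≤ n) (ha₁ : 1 ≤ a₁)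
    (ha : a₁ + a₂ = 4) (hb : b₁ + b₂ = 2 * n + 4)
    (hb₁ : b₁ = n * (a₁ - 1))
    (h₂ : a₂ = 0 ∨ n * a₂ ≤ b₂) :
    n ≤ 4 := by
  have ha₁4 : a₁ ≤ 4 := by omega
  have ha₂4 : a₂ ≤ 4 := by omega
  interval_cases a₁ <;> interval_cases a₂ <;> omega
end

section
/- Let n ≥ 5 be a natural number. Call a pair (a,b) of natural numbers admissible for 𝔽_n if a = 0, or b ≥ n·a, or (a,b) = (1,0), or (a ≥ 2 and b = n(a−1)); call it C-containing if (a,b) = (1,0) or (a ≥ 2 and b = n(a−1) and b < n·a). Then there do not exist admissible pairs (a₁,b₁), (a₂,b₂) for 𝔽_n, at most one of which is C-containing, with a₁ + a₂ = 4 and b₁ + b₂ = 2n + 4. -/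
/-- A class `aC + bF` on 𝔽_n admits a smooth reduced effective member:
either empty or a union of fibres (`a = 0`), or irreducible (`b ≥ n·a`, or the
negative section `C` itself, i.e. `(a,b) = (1,0)`), or `C` plus an irreducible
curve disjoint from `C` (`a ≥ 2` and `b = n(a−1)`). -/
def FnAdmissible (n a b : ℕ) : Prop :=
  a = 0 ∨ n * a ≤ b ∨ (a = 1 ∧ b = 0) ∨ (2 ≤ a ∧ b = n * (a - 1))

/-- The class `aC + bF` on 𝔽_n contains the negative section `C`:
either `(a,b) = (1,0)` or `a ≥ 2`, `b = n(a−1)` and `b < n·a`. -/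
def FnCContaining (n a b : ℕ) : Prop :=
  (a = 1 ∧ b = 0) ∨ (2 ≤ a ∧ b = n * (a - 1) ∧ b < n * a)

/-- Arithmetic core of the assertion (Theorem 1.1(3), Section 6) that smooth
bidouble covers of 𝔽_n with a K3 intermediate quotient exist only for `n ≤ 4`:
for `n ≥ 5` there are no admissible pairs, at most one of which is
C-containing, summing to `−2K = 4C + (2n+4)F`. -/
theorem no_bidouble_K3_quotient_on_Fn_of_five_le (n : ℕ) (hn : 5 ≤ n) :
    ¬ ∃ a₁ b₁ a₂ b₂ : ℕ,
      FnAdmissible n a₁ b₁ ∧ FnAdmissible n a₂ b₂ ∧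
      ¬(FnCContaining n a₁ b₁ ∧ FnCContaining n a₂ b₂) ∧
      a₁ + a₂ = 4 ∧ b₁ + b₂ = 2 * n + 4 := by
  rintro ⟨a₁, b₁, a₂, b₂, h1, h2, h3, h4, h5⟩
  have ha : a₁ ≤ 4 := by omega
  simp only [FnAdmissible, FnCContaining] at h1 h2 h3
  have ha2 : a₂ ≤ 4 := by omega
  interval_cases a₁ <;> interval_cases a₂ <;> simp_all <;> omega
end

section
/- Let (a₁,b₁), (a₂,b₂), (a₃,b₃) be pairs of natural numbers satisfying: (i) aᵢ+aⱼ and bᵢ+bⱼ are even for all i ≠ j; (ii) at most one index has (aᵢ,bᵢ) = (0,0); (iii) each pair is admissible for 𝔽₃, i.e. aᵢ = 0, or bᵢ ≥ 3aᵢ, or (aᵢ,bᵢ) = (1,0), or (aᵢ ≥ 2 and bᵢ = 3(aᵢ−1)); (iv) at most one index is C-containing, i.e. of the form (1,0) or (aᵢ ≥ 2, bᵢ = 3(aᵢ−1), bᵢ < 3aᵢ); (v) for every i (with {i,j,k} = {1,2,3}), either (aⱼ+aₖ = 4 and bⱼ+bₖ = 10), or aⱼ+aₖ ≤ 2, or bⱼ+bₖ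 ≤ 8; and (vi) there exists i with aⱼ+aₖ = 4 and bⱼ+bₖ = 10. Then, up to a permutation of the indices, the triple is one of: ((4,9),(0,1),(0,1)); ((3,6),(1,4),(1,4)); ((2,3),(2,7),(0,2k+1)) for some k ≥ 0. -/
/-- A class `aC + bF` on 𝔽₃ admits a smooth reduced effective member. -/
def F3Admissible (a b : ℕ) : Prop :=
  a = 0 ∨ 3 * a ≤ b ∨ (a = 1 ∧ b = 0) ∨ (2 ≤ a ∧ b = 3 * (a - 1))

/-- The class `aC + bF` on 𝔽₃ contains the negative section `C`. -/
def F3CContaining (a b : ℕ) : Prop :=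
  (a = 1 ∧ b = 0) ∨ (2 ≤ a ∧ b = 3 * (a - 1) ∧ b < 3 * a)

private lemma ms_swap23 (x y z : ℕ × ℕ) :
    ({x, y, z} : Multiset (ℕ × ℕ)) = {x, z, y} := by
  show x ::ₘ y ::ₘ z ::ₘ 0 = x ::ₘ z ::ₘ y ::ₘ 0
  rw [Multiset.cons_swap y z]

private lemma ms_swap12 (x y z : ℕ × ℕ) :
    ({x, y, z} : Multiset (ℕ × ℕ)) = {y, x, z} :=
  Multiset.cons_swap x y {z}

set_option maxHeartbeats 1000000 in
private lemma key_s9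
    (a₁ b₁ a₂ b₂ a₃ b₃ : ℕ)
    (hEa₁₂ : Even (a₁ + a₂)) (hEb₁₂ : Even (b₁ + b₂))
    (had₁ : F3Admissible a₁ b₁) (had₂ : F3Admissible a₂ b₂) (had₃ : F3Admissible a₃ b₃)
    (hC₁₂ : ¬(F3CContaining a₁ b₁ ∧ F3CContaining a₂ b₂))
    (hC₁₃ : ¬(F3CContaining a₁ b₁ ∧ F3CContaining a₃ b₃))
    (hC₂₃ : ¬(F3CContaining a₂ b₂ ∧ F3CContaining a₃ b₃))
    (hY₂ : (a₁ + a₃ = 4 ∧ b₁ + b₃ = 10) ∨ a₁ + a₃ ≤ 2 ∨ b₁ + b₃ ≤ 8)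
    (hY₃ : (a₁ + a₂ = 4 ∧ b₁ + b₂ = 10) ∨ a₁ + a₂ ≤ 2 ∨ b₁ + b₂ ≤ 8)
    (ha : a₂ + a₃ = 4) (hb : b₂ + b₃ = 10) :
    ({(a₁,b₁),(a₂,b₂),(a₃,b₃)} : Multiset (ℕ × ℕ)) = {(4,9),(0,1),(0,1)} ∨
    ({(a₁,b₁),(a₂,b₂),(a₃,b₃)} : Multiset (ℕ × ℕ)) = {(3,6),(1,4),(1,4)} ∨
    (∃ k : ℕ,
      ({(a₁,b₁),(a₂,b₂),(a₃,b₃)} : Multiset (ℕ × ℕ)) = {(2,3),(2,7),(0,2*k+1)}) := by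
  simp only [F3Admissible, F3CContaining, Nat.even_iff] at had₁ had₂ had₃ hC₁₂ hC₁₃ hC₂₃ hEa₁₂ hEb₁₂
  have P : (a₂ = 0 ∧ b₂ = 1 ∧ a₃ = 4 ∧ b₃ = 9) ∨ (a₂ = 4 ∧ b₂ = 9 ∧ a₃ = 0 ∧ b₃ = 1) ∨
      (a₂ = 1 ∧ b₂ = 0 ∧ a₃ = 3 ∧ b₃ = 10) ∨ (a₂ = 3 ∧ b₂ = 10 ∧ a₃ = 1 ∧ b₃ = 0) ∨
      (a₂ = 1 ∧ b₂ = 4 ∧ a₃ = 3 ∧ b₃ = 6) ∨ (a₂ = 3 ∧ b₂ = 6 ∧ a₃ = 1 ∧ b₃ = 4) ∨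
      (a₂ = 2 ∧ b₂ = 3 ∧ a₃ = 2 ∧ b₃ = 7) ∨ (a₂ = 2 ∧ b₂ = 7 ∧ a₃ = 2 ∧ b₃ = 3) := by
    clear hC₁₂ hC₁₃ had₁ hY₂ hY₃ hEa₁₂ hEb₁₂
    have ha2 : a₂ = 0 ∨ a₂ = 1 ∨ a₂ = 2 ∨ a₂ = 3 ∨ a₂ = 4 := by omega
    rcases ha2 with rfl | rfl | rfl | rfl | rfl
    · have h3 : a₃ = 4 := by omega
      subst h3
      obtain ⟨rfl, rfl⟩ : b₂ = 1 ∧ b₃ = 9 := by clear hC₂₃ had₂; omega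
      decide
    · have h3 : a₃ = 3 := by omega
      subst h3
      rcases (show (b₂ = 0 ∧ b₃ = 10) ∨ (b₂ = 4 ∧ b₃ = 6) by clear hC₂₃; omega) with
        ⟨rfl, rfl⟩ | ⟨rfl, rfl⟩ <;> decide
    · have h3 : a₃ = 2 := by omega
      subst h3
      rcases (show (b₂ = 3 ∧ b₃ = 7) ∨ (b₂ = 7 ∧ b₃ = 3) by clear hC₂₃; omega) with
        ⟨rfl, rfl⟩ | ⟨rfl, rfl⟩ <;> decide
    · have h3 : a₃ = 1 := by omega
      subst h3
      rcases (show (b₂ = 10 ∧ b₃ = 0) ∨ (b₂ = 6 ∧ b₃ = 4) by clear hC₂₃; omega) with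
        ⟨rfl, rfl⟩ | ⟨rfl, rfl⟩ <;> decide
    · have h3 : a₃ = 0 := by omega
      subst h3
      obtain ⟨rfl, rfl⟩ : b₂ = 9 ∧ b₃ = 1 := by clear hC₂₃ had₃; omega
      decide
  clear had₂ had₃ hC₂₃ ha hb
  rcases P with ⟨h1,h2,h3,h4⟩|⟨h1,h2,h3,h4⟩|⟨h1,h2,h3,h4⟩|⟨h1,h2,h3,h4⟩|
    ⟨h1,h2,h3,h4⟩|⟨h1,h2,h3,h4⟩|⟨h1,h2,h3,h4⟩|⟨h1,h2,h3,h4⟩ <;>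
    subst h1 h2 h3 h4
  · obtain ⟨rfl, rfl⟩ : a₁ = 0 ∧ b₁ = 1 := by
      clear had₁ hC₁₂ hC₁₃ hY₃ hEa₁₂ hEb₁₂; omega
    exact Or.inl (by decide)
  · obtain ⟨rfl, rfl⟩ : a₁ = 0 ∧ b₁ = 1 := by
      clear had₁ hC₁₂ hC₁₃ hY₂ hEa₁₂ hEb₁₂; omega
    exact Or.inl (by decide)
  · exfalso; clear had₁ hC₁₃ hY₃ hEa₁₂ hEb₁₂; omega
  · exfalso; clear had₁ hC₁₂ hY₂ hEa₁₂ hEb₁₂; omega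
  · obtain ⟨rfl, rfl⟩ : a₁ = 1 ∧ b₁ = 4 := by clear hC₁₂ hEb₁₂; omega
    exact Or.inr (Or.inl (by decide))
  · obtain ⟨rfl, rfl⟩ : a₁ = 1 ∧ b₁ = 4 := by clear hC₁₃ hEb₁₂; omega
    exact Or.inr (Or.inl (by decide))
  · obtain ⟨rfl, hodd⟩ : a₁ = 0 ∧ b₁ % 2 = 1 := by clear hC₁₃ hEa₁₂; omega
    obtain ⟨k, rfl⟩ : ∃ k, b₁ = 2 * k + 1 := ⟨b₁ / 2, by omega⟩
    refine Or.inr (Or.inr ⟨k, ?_⟩)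
    rw [ms_swap12, ms_swap23]
  · obtain ⟨rfl, hodd⟩ : a₁ = 0 ∧ b₁ % 2 = 1 := by clear hC₁₂ hEa₁₂; omega
    obtain ⟨k, rfl⟩ : ∃ k, b₁ = 2 * k + 1 := ⟨b₁ / 2, by omega⟩
    refine Or.inr (Or.inr ⟨k, ?_⟩)
    rw [ms_swap12, ms_swap23, ms_swap12]

/-- Arithmetic core of the `n = 3` case of Theorem 6.4 (Table 9):
classification of smooth bidouble covers of 𝔽₃ whose intermediate quotients
are each a K3 surface or have `p_g = 0`, with at least one a K3 surface. -/
theorem bidouble_cover_F3_classification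
    (a₁ b₁ a₂ b₂ a₃ b₃ : ℕ)
    (hEa₁₂ : Even (a₁ + a₂)) (hEb₁₂ : Even (b₁ + b₂))
    (hEa₁₃ : Even (a₁ + a₃)) (hEb₁₃ : Even (b₁ + b₃))
    (hEa₂₃ : Even (a₂ + a₃)) (hEb₂₃ : Even (b₂ + b₃))
    (hz₁₂ : ¬(a₁ = 0 ∧ b₁ = 0 ∧ a₂ = 0 ∧ b₂ = 0))
    (hz₁₃ : ¬(a₁ = 0 ∧ b₁ = 0 ∧ a₃ = 0 ∧ b₃ = 0))
    (hz₂₃ : ¬(a₂ = 0 ∧ b₂ = 0 ∧ a₃ = 0 ∧ b₃ = 0))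
    (had₁ : F3Admissible a₁ b₁) (had₂ : F3Admissible a₂ b₂) (had₃ : F3Admissible a₃ b₃)
    (hC₁₂ : ¬(F3CContaining a₁ b₁ ∧ F3CContaining a₂ b₂))
    (hC₁₃ : ¬(F3CContaining a₁ b₁ ∧ F3CContaining a₃ b₃))
    (hC₂₃ : ¬(F3CContaining a₂ b₂ ∧ F3CContaining a₃ b₃))
    (hY₁ : (a₂ + a₃ = 4 ∧ b₂ + b₃ = 10) ∨ a₂ + a₃ ≤ 2 ∨ b₂ + b₃ ≤ 8)
    (hY₂ : (a₁ + a₃ = 4 ∧ b₁ + b₃ = 10) ∨ a₁ + a₃ ≤ 2 ∨ b₁ + b₃ ≤ 8)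
    (hY₃ : (a₁ + a₂ = 4 ∧ b₁ + b₂ = 10) ∨ a₁ + a₂ ≤ 2 ∨ b₁ + b₂ ≤ 8)
    (hK3 : (a₂ + a₃ = 4 ∧ b₂ + b₃ = 10) ∨ (a₁ + a₃ = 4 ∧ b₁ + b₃ = 10) ∨
      (a₁ + a₂ = 4 ∧ b₁ + b₂ = 10)) :
    ({(a₁,b₁),(a₂,b₂),(a₃,b₃)} : Multiset (ℕ × ℕ)) = {(4,9),(0,1),(0,1)} ∨
    ({(a₁,b₁),(a₂,b₂),(a₃,b₃)} : Multiset (ℕ × ℕ)) = {(3,6),(1,4),(1,4)} ∨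
    (∃ k : ℕ,
      ({(a₁,b₁),(a₂,b₂),(a₃,b₃)} : Multiset (ℕ × ℕ)) = {(2,3),(2,7),(0,2*k+1)}) := by
  rcases hK3 with ⟨ha, hb⟩ | ⟨ha, hb⟩ | ⟨ha, hb⟩
  · exact key_s9 a₁ b₁ a₂ b₂ a₃ b₃ hEa₁₂ hEb₁₂ had₁ had₂ had₃ hC₁₂ hC₁₃ hC₂₃ hY₂ hY₃ ha hb
  · have h := key_s9 a₂ b₂ a₁ b₁ a₃ b₃ (by rwa [add_comm] at hEa₁₂) (by rwa [add_comm] at hEb₁₂)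
      had₂ had₁ had₃ (fun ⟨p, q⟩ => hC₁₂ ⟨q, p⟩) hC₂₃ hC₁₃ hY₁
      (by rwa [add_comm a₁ a₂, add_comm b₁ b₂] at hY₃) ha hb
    rwa [show ({(a₂,b₂),(a₁,b₁),(a₃,b₃)} : Multiset (ℕ × ℕ)) = {(a₁,b₁),(a₂,b₂),(a₃,b₃)} from
      ms_swap12 _ _ _] at h
  · have h := key_s9 a₃ b₃ a₁ b₁ a₂ b₂ (by rwa [add_comm] at hEa₁₃) (by rwa [add_comm] at hEb₁₃)
      had₃ had₁ had₂ (fun ⟨p, q⟩ => hC₁₃ ⟨q, p⟩) (fun ⟨p, q⟩ => hC₂₃ ⟨q, p⟩) hC₁₂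
      (by rwa [add_comm a₂ a₃, add_comm b₂ b₃] at hY₁)
      (by rwa [add_comm a₁ a₃, add_comm b₁ b₃] at hY₂) ha hb
    rwa [show ({(a₃,b₃),(a₁,b₁),(a₂,b₂)} : Multiset (ℕ × ℕ)) = {(a₁,b₁),(a₂,b₂),(a₃,b₃)} from
      (ms_swap12 _ _ _).trans (ms_swap23 _ _ _)] at h
end
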